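/- arXiv:1108.0258 — 2 statements merged into one kernel-verified Lean document; each statement's English description precedes it below -/
import Mathlib

section
/- Let Γ be a cancellation monoid with neutral element e and A = ⊕_{γ∈Γ} A_γ a Γ-graded ring whose degree-e part A_e is a local ring in the classical sense. Let 𝔏 be the sum of all proper graded left ideals of A, ℜ the sum of all proper graded right ideals of A, and 𝔐 the sum of all proper graded two-sided ideals of A. Then 𝔏 = 𝔐 = ℜ as subsets of A. -/
/-!
Let `𝔐` be the set of elements all of whose homogeneous components are non-units. A proper
graded left, right or two-sided ideal contains no homogeneous unit, so it lies in `𝔐`.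
Conversely, when `A₀` is local, `𝔐` is itself a proper graded two-sided ideal; hence it is the
largest proper graded ideal of each of the three kinds, and the three sums coincide with it.
That `𝔐` is closed under addition and multiplication comes down to homogeneous elements: the
inverse of a homogeneous unit is homogeneous, and a homogeneous element with a homogeneous
one-sided inverse is already a unit.
-/

section

variable {Γ : Type*} [AddCancelMonoid Γ] [DecidableEq Γ]
variable {A : Type*} [Ring A] (𝒜 : Γ → AddSubgroup A) [GradedRing 𝒜]

/-- A left ideal of `A` is graded if it contains all homogeneous components of each of
its elements (equivalently, it is generated by homogeneous elements). -/
def Ideal.IsGradedLeft (I : Ideal A) : Prop :=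
  ∀ a ∈ I, ∀ γ : Γ, (DirectSum.decompose 𝒜 a γ : A) ∈ I

/-- A right ideal of `A` (a submodule of `A` over `Aᵐᵒᵖ`) is graded if it contains all
homogeneous components of each of its elements. -/
def Ideal.IsGradedRight (I : Submodule Aᵐᵒᵖ A) : Prop :=
  ∀ a ∈ I, ∀ γ : Γ, (DirectSum.decompose 𝒜 a γ : A) ∈ I

/-- A two-sided ideal of `A` is graded if it contains all homogeneous components of each
of its elements. -/
def TwoSidedIdeal.IsGraded (I : TwoSidedIdeal A) : Prop :=
  ∀ a ∈ I, ∀ γ : Γ, (DirectSum.decompose 𝒜 a γ : A) ∈ I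

theorem IsLocalRing.eq_zero_or_eq_one_of_isIdempotentElem {R : Type*} [Ring R] [IsLocalRing R]
    {e : R} (he : IsIdempotentElem e) : e = 0 ∨ e = 1 := by
  rcases IsLocalRing.isUnit_or_isUnit_of_add_one (add_sub_cancel e 1) with h | h
  · exact .inr ((IsIdempotentElem.iff_eq_one_of_isUnit h).mp he)
  · exact .inl (by simpa using (IsIdempotentElem.iff_eq_one_of_isUnit h).mp he.one_sub)

theorem TwoSidedIdeal.eq_top_of_isUnit_mem {R : Type*} [Ring R] (I : TwoSidedIdeal R) {x : R}
    (hx : x ∈ I) (h : IsUnit x) : I = ⊤ :=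
  I.one_mem_iff.mp (by simpa [h.val_inv_mul] using I.mul_mem_left (↑h.unit⁻¹) x hx)

def TwoSidedIdeal.asRightIdeal {R : Type*} [Ring R] (I : TwoSidedIdeal R) : Submodule Rᵐᵒᵖ R where
  carrier := I
  add_mem' := I.add_mem
  zero_mem' := I.zero_mem
  smul_mem' r _ hx := I.mul_mem_right _ r.unop hx

theorem Submodule.eq_top_of_isUnit_mem_op {R : Type*} [Ring R] (I : Submodule Rᵐᵒᵖ R) {x : R}
    (hx : x ∈ I) (h : IsUnit x) : I = ⊤ :=
  Submodule.eq_top_iff'.mpr fun b => by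
    simpa [MulOpposite.smul_eq_mul_unop, ← mul_assoc] using I.smul_mem (.op (↑h.unit⁻¹ * b)) hx

theorem SetLike.nontrivial_of_nontrivial_coe {α S : Type*} [SetLike S α] (s : S) [Nontrivial s] :
    Nontrivial α :=
  (Subtype.val_injective : Function.Injective ((↑) : s → α)).nontrivial

open DirectSum

namespace DirectSum

variable {𝒜}

theorem coe_decompose_mul_of_left_mem_of_forall_add_ne {a b : A} {i n : Γ} (ha : a ∈ 𝒜 i)
    (h : ∀ j, i + j ≠ n) : (decompose 𝒜 (a * b) n : A) = 0 := by
  induction b using DirectSum.Decomposition.inductionOn 𝒜 with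
  | zero => simp
  | homogeneous b => exact decompose_of_mem_ne 𝒜 (SetLike.mul_mem_graded ha b.2) (h _)
  | add b c hb hc => rw [mul_add, decompose_add, add_apply, AddMemClass.coe_add, hb, hc, add_zero]

theorem coe_decompose_mul_of_right_mem_of_forall_add_ne {a b : A} {i n : Γ} (hb : b ∈ 𝒜 i)
    (h : ∀ j, j + i ≠ n) : (decompose 𝒜 (a * b) n : A) = 0 := by
  induction a using DirectSum.Decomposition.inductionOn 𝒜 with
  | zero => simp
  | homogeneous a => exact decompose_of_mem_ne 𝒜 (SetLike.mul_mem_graded a.2 hb) (h _)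
  | add a c ha hc => rw [add_mul, decompose_add, add_apply, AddMemClass.coe_add, ha, hc, add_zero]

theorem coe_decompose_mul_of_left_mem_eq_zero_or {a : A} {i : Γ} (ha : a ∈ 𝒜 i) (b : A)
    (n : Γ) : (decompose 𝒜 (a * b) n : A) = 0 ∨
      ∃ j, i + j = n ∧ (decompose 𝒜 (a * b) n : A) = a * decompose 𝒜 b j := by
  by_cases h : ∃ j, i + j = n
  · obtain ⟨j, rfl⟩ := h
    exact .inr ⟨j, rfl, coe_decompose_mul_add_of_left_mem 𝒜 ha⟩
  · exact .inl (coe_decompose_mul_of_left_mem_of_forall_add_ne ha (not_exists.mp h))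

theorem coe_decompose_mul_of_right_mem_eq_zero_or {b : A} {i : Γ} (hb : b ∈ 𝒜 i) (a : A)
    (n : Γ) : (decompose 𝒜 (a * b) n : A) = 0 ∨
      ∃ j, j + i = n ∧ (decompose 𝒜 (a * b) n : A) = decompose 𝒜 a j * b := by
  by_cases h : ∃ j, j + i = n
  · obtain ⟨j, rfl⟩ := h
    exact .inr ⟨j, rfl, coe_decompose_mul_add_of_right_mem 𝒜 hb⟩
  · exact .inl (coe_decompose_mul_of_right_mem_of_forall_add_ne hb (not_exists.mp h))

end DirectSum

namespace GradedRing

variable {𝒜}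

theorem add_eq_zero_of_mul_eq_one [Nontrivial A] {x y : A} {γ δ : Γ} (hx : x ∈ 𝒜 γ)
    (hy : y ∈ 𝒜 δ) (h : x * y = 1) : γ + δ = 0 :=
  DirectSum.degree_eq_of_mem_mem 𝒜 (h ▸ SetLike.mul_mem_graded hx hy)
    (SetLike.one_mem_graded 𝒜) one_ne_zero

theorem exists_inv_mem_of_coe_mem [Nontrivial A] (u : Aˣ) {γ : Γ} (hu : (u : A) ∈ 𝒜 γ) :
    ∃ δ, (↑u⁻¹ : A) ∈ 𝒜 δ := by
  have h1 : (decompose 𝒜 (u * ↑u⁻¹ : A) 0 : A) = 1 := by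
    rw [u.mul_inv, decompose_of_mem_same 𝒜 (SetLike.one_mem_graded 𝒜)]
  rcases coe_decompose_mul_of_left_mem_eq_zero_or hu (↑u⁻¹) 0 with h0 | ⟨δ, -, hδ⟩
  · exact absurd (h1.symm.trans h0) one_ne_zero
  · refine ⟨δ, ?_⟩
    rw [u.inv_eq_of_mul_eq_one_right (hδ ▸ h1)]
    exact (decompose 𝒜 (↑u⁻¹ : A) δ).2

variable (𝒜) in
def componentwiseNonunits : Set A := {a | ∀ γ, (decompose 𝒜 a γ : A) ∈ nonunits A}

theorem one_notMem_componentwiseNonunits : (1 : A) ∉ componentwiseNonunits 𝒜 := fun h =>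
  h 0 (by rw [decompose_of_mem_same 𝒜 (SetLike.one_mem_graded 𝒜)]; exact isUnit_one)

theorem subset_componentwiseNonunits {J : Set A} (hJ : ∀ a ∈ J, ∀ γ, (decompose 𝒜 a γ : A) ∈ J)
    (hJu : ∀ x ∈ J, ¬IsUnit x) : J ⊆ componentwiseNonunits 𝒜 :=
  fun a ha γ => hJu _ (hJ a ha γ)

section Nontrivial

variable [Nontrivial A]

theorem zero_mem_componentwiseNonunits : (0 : A) ∈ componentwiseNonunits 𝒜 := fun γ => by
  rw [decompose_zero, DirectSum.zero_apply, ZeroMemClass.coe_zero]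
  exact zero_mem_nonunits.mpr zero_ne_one

theorem decompose_mem_componentwiseNonunits {a : A} (ha : a ∈ componentwiseNonunits 𝒜)
    (γ : Γ) : (decompose 𝒜 a γ : A) ∈ componentwiseNonunits 𝒜 := fun γ' => by
  by_cases h : γ = γ'
  · rw [← h, decompose_of_mem_same 𝒜 (decompose 𝒜 a γ).2]
    exact ha γ
  · rw [decompose_of_mem_ne 𝒜 (decompose 𝒜 a γ).2 h]
    exact zero_mem_nonunits.mpr zero_ne_one

end Nontrivial

variable [IsLocalRing (𝒜 0)]

/-- `x * b` is an idempotent of the local ring `𝒜 0`, and it is not `0`. -/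
theorem isUnit_of_mul_eq_one_right_of_mem {b x : A} {γ δ : Γ} (hb : b ∈ 𝒜 δ) (hx : x ∈ 𝒜 γ)
    (h : b * x = 1) : IsUnit x := by
  have := SetLike.nontrivial_of_nontrivial_coe (𝒜 0)
  have hγδ : γ + δ = 0 := add_eq_zero_symm (add_eq_zero_of_mul_eq_one hb hx h)
  let e : 𝒜 0 := ⟨x * b, hγδ ▸ SetLike.mul_mem_graded hx hb⟩
  have he : IsIdempotentElem e := Subtype.ext <| by
    change x * b * (x * b) = x * b
    rw [mul_assoc, ← mul_assoc b, h, one_mul]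
  rcases IsLocalRing.eq_zero_or_eq_one_of_isIdempotentElem he with he0 | he1
  · have hxb : x * b = 0 := congrArg Subtype.val he0
    refine absurd ?_ (one_ne_zero (α := A))
    calc (1 : A) = b * x * (b * x) := by rw [h, one_mul]
      _ = b * (x * b) * x := by simp only [mul_assoc]
      _ = 0 := by rw [hxb, mul_zero, zero_mul]
  · exact ⟨⟨x, b, congrArg Subtype.val he1, h⟩, rfl⟩

theorem isUnit_of_mul_eq_one_of_mem {x b : A} {γ δ : Γ} (hx : x ∈ 𝒜 γ) (hb : b ∈ 𝒜 δ)
    (h : x * b = 1) : IsUnit x := by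
  obtain ⟨u, rfl⟩ := isUnit_of_mul_eq_one_right_of_mem hx hb h
  rw [← u.inv_eq_of_mul_eq_one_left h]
  exact u⁻¹.isUnit

theorem isUnit_of_mul_isUnit_right_of_mem {w x : A} {γ δ : Γ} (hw : w ∈ 𝒜 δ) (hx : x ∈ 𝒜 γ)
    (h : IsUnit (w * x)) : IsUnit x := by
  have := SetLike.nontrivial_of_nontrivial_coe (𝒜 0)
  obtain ⟨u, hu⟩ := h
  obtain ⟨ε, hε⟩ := exists_inv_mem_of_coe_mem u (hu ▸ SetLike.mul_mem_graded hw hx)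
  refine isUnit_of_mul_eq_one_right_of_mem (SetLike.mul_mem_graded hε hw) hx ?_
  rw [mul_assoc, ← hu, u.inv_mul]

theorem isUnit_of_mul_isUnit_left_of_mem {x w : A} {γ δ : Γ} (hx : x ∈ 𝒜 γ) (hw : w ∈ 𝒜 δ)
    (h : IsUnit (x * w)) : IsUnit x := by
  have := SetLike.nontrivial_of_nontrivial_coe (𝒜 0)
  obtain ⟨u, hu⟩ := h
  obtain ⟨ε, hε⟩ := exists_inv_mem_of_coe_mem u (hu ▸ SetLike.mul_mem_graded hx hw)
  refine isUnit_of_mul_eq_one_of_mem hx (SetLike.mul_mem_graded hw hε) ?_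
  rw [← mul_assoc, ← hu, u.mul_inv]

/-- If `w` inverts `x + y`, then `w * x + w * y = 1` in the local ring `𝒜 0`, so `w * x` or
`w * y` is a unit. -/
theorem not_isUnit_add_of_mem {x y : A} {γ : Γ} (hx : x ∈ 𝒜 γ) (hy : y ∈ 𝒜 γ)
    (hnx : ¬IsUnit x) (hny : ¬IsUnit y) : ¬IsUnit (x + y) := by
  have := SetLike.nontrivial_of_nontrivial_coe (𝒜 0)
  rintro ⟨u, hu⟩
  have hxy : (u : A) ∈ 𝒜 γ := hu ▸ add_mem hx hy
  obtain ⟨δ, hw⟩ := exists_inv_mem_of_coe_mem u hxy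
  have hδγ : δ + γ = 0 := add_eq_zero_of_mul_eq_one hw hxy u.inv_mul
  let X : 𝒜 0 := ⟨↑u⁻¹ * x, hδγ ▸ SetLike.mul_mem_graded hw hx⟩
  let Y : 𝒜 0 := ⟨↑u⁻¹ * y, hδγ ▸ SetLike.mul_mem_graded hw hy⟩
  have hXY : X + Y = 1 := Subtype.ext <| by
    change ↑u⁻¹ * x + ↑u⁻¹ * y = 1
    rw [← mul_add, ← hu, u.inv_mul]
  rcases IsLocalRing.isUnit_or_isUnit_of_add_one hXY with hX | hY
  · exact hnx <| isUnit_of_mul_isUnit_right_of_mem hw hx <|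
      hX.map (SetLike.GradeZero.submonoid 𝒜).subtype
  · exact hny <| isUnit_of_mul_isUnit_right_of_mem hw hy <|
      hY.map (SetLike.GradeZero.submonoid 𝒜).subtype

theorem add_mem_componentwiseNonunits {a b : A} (ha : a ∈ componentwiseNonunits 𝒜)
    (hb : b ∈ componentwiseNonunits 𝒜) : a + b ∈ componentwiseNonunits 𝒜 := fun γ => by
  rw [decompose_add, DirectSum.add_apply, AddMemClass.coe_add]
  exact not_isUnit_add_of_mem (decompose 𝒜 a γ).2 (decompose 𝒜 b γ).2 (ha γ) (hb γ)

theorem mul_mem_componentwiseNonunits_left (r : A) {a : A}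
    (ha : a ∈ componentwiseNonunits 𝒜) : r * a ∈ componentwiseNonunits 𝒜 := by
  have := SetLike.nontrivial_of_nontrivial_coe (𝒜 0)
  induction r using DirectSum.Decomposition.inductionOn 𝒜 with
  | zero => rw [zero_mul]; exact zero_mem_componentwiseNonunits
  | homogeneous r =>
    intro γ
    rcases coe_decompose_mul_of_left_mem_eq_zero_or r.2 a γ with h0 | ⟨ν, -, hν⟩
    · rw [h0]
      exact zero_mem_nonunits.mpr zero_ne_one
    · rw [hν]
      exact mt (isUnit_of_mul_isUnit_right_of_mem r.2 (decompose 𝒜 a ν).2) (ha ν)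
  | add r s hr hs => rw [add_mul]; exact add_mem_componentwiseNonunits hr hs

theorem mul_mem_componentwiseNonunits_right (r : A) {a : A}
    (ha : a ∈ componentwiseNonunits 𝒜) : a * r ∈ componentwiseNonunits 𝒜 := by
  have := SetLike.nontrivial_of_nontrivial_coe (𝒜 0)
  induction r using DirectSum.Decomposition.inductionOn 𝒜 with
  | zero => rw [mul_zero]; exact zero_mem_componentwiseNonunits
  | homogeneous r =>
    intro γ
    rcases coe_decompose_mul_of_right_mem_eq_zero_or r.2 a γ with h0 | ⟨ν, -, hν⟩
    · rw [h0]
      exact zero_mem_nonunits.mpr zero_ne_one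
    · rw [hν]
      exact mt (isUnit_of_mul_isUnit_left_of_mem (decompose 𝒜 a ν).2 r.2) (ha ν)
  | add r s hr hs => rw [mul_add]; exact add_mem_componentwiseNonunits hr hs

variable (𝒜) in
def componentwiseNonunitsIdeal : TwoSidedIdeal A :=
  .mk' (componentwiseNonunits 𝒜)
    (have := SetLike.nontrivial_of_nontrivial_coe (𝒜 0); zero_mem_componentwiseNonunits)
    add_mem_componentwiseNonunits
    (fun ha => by simpa using mul_mem_componentwiseNonunits_left (-1) ha)
    (mul_mem_componentwiseNonunits_left _) (mul_mem_componentwiseNonunits_right _)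

theorem mem_componentwiseNonunitsIdeal {a : A} :
    a ∈ componentwiseNonunitsIdeal 𝒜 ↔ a ∈ componentwiseNonunits 𝒜 :=
  TwoSidedIdeal.mem_mk' ..

theorem decompose_mem_componentwiseNonunitsIdeal {a : A} (ha : a ∈ componentwiseNonunitsIdeal 𝒜)
    (γ : Γ) : (decompose 𝒜 a γ : A) ∈ componentwiseNonunitsIdeal 𝒜 :=
  have := SetLike.nontrivial_of_nontrivial_coe (𝒜 0)
  mem_componentwiseNonunitsIdeal.mpr
    (decompose_mem_componentwiseNonunits (mem_componentwiseNonunitsIdeal.mp ha) γ)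

theorem one_notMem_componentwiseNonunitsIdeal : (1 : A) ∉ componentwiseNonunitsIdeal 𝒜 :=
  mt mem_componentwiseNonunitsIdeal.mp one_notMem_componentwiseNonunits

theorem isGreatest_isGradedLeft_ne_top :
    IsGreatest {I : Ideal A | Ideal.IsGradedLeft 𝒜 I ∧ I ≠ ⊤}
      (TwoSidedIdeal.asIdeal (componentwiseNonunitsIdeal 𝒜)) :=
  ⟨⟨fun _ ha => decompose_mem_componentwiseNonunitsIdeal ha,
      (Ideal.ne_top_iff_one _).mpr one_notMem_componentwiseNonunitsIdeal⟩,
    fun J ⟨hJ, hJ_ne⟩ _ ha => mem_componentwiseNonunitsIdeal.mpr <|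
      subset_componentwiseNonunits hJ (fun _ hx hu => hJ_ne (J.eq_top_of_isUnit_mem hx hu)) ha⟩

theorem isGreatest_isGraded_ne_top :
    IsGreatest {I : TwoSidedIdeal A | TwoSidedIdeal.IsGraded 𝒜 I ∧ I ≠ ⊤}
      (componentwiseNonunitsIdeal 𝒜) :=
  ⟨⟨fun _ ha => decompose_mem_componentwiseNonunitsIdeal ha,
      fun h => one_notMem_componentwiseNonunitsIdeal (h ▸ TwoSidedIdeal.mem_top _)⟩,
    fun J ⟨hJ, hJ_ne⟩ _ ha => mem_componentwiseNonunitsIdeal.mpr <|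
      subset_componentwiseNonunits hJ (fun _ hx hu => hJ_ne (J.eq_top_of_isUnit_mem hx hu)) ha⟩

theorem isGreatest_isGradedRight_ne_top :
    IsGreatest {I : Submodule Aᵐᵒᵖ A | Ideal.IsGradedRight 𝒜 I ∧ I ≠ ⊤}
      (componentwiseNonunitsIdeal 𝒜).asRightIdeal :=
  ⟨⟨fun _ ha => decompose_mem_componentwiseNonunitsIdeal ha,
      fun h => one_notMem_componentwiseNonunitsIdeal (h ▸ Submodule.mem_top)⟩,
    fun J ⟨hJ, hJ_ne⟩ _ ha => mem_componentwiseNonunitsIdeal.mpr <|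
      subset_componentwiseNonunits hJ (fun _ hx hu => hJ_ne (J.eq_top_of_isUnit_mem_op hx hu)) ha⟩

end GradedRing

/-- **Proposition 2.3(iv).**  Let `A` be a `Γ`-graded ring whose degree-`0` part is a local
ring in the classical sense, `𝔏` the sum of all proper graded left ideals, `ℜ` the sum of
all proper graded right ideals, and `𝔐` the sum of all proper graded two-sided ideals of
`A`.  Then `𝔏 = 𝔐 = ℜ` as subsets of `A`. -/
theorem sSup_proper_graded_left_eq_twoSided_eq_right [IsLocalRing (𝒜 0)] :
    (((sSup {I : Ideal A | Ideal.IsGradedLeft 𝒜 I ∧ I ≠ ⊤} : Ideal A) : Set A) =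
        ((sSup {I : TwoSidedIdeal A | TwoSidedIdeal.IsGraded 𝒜 I ∧ I ≠ ⊤} :
          TwoSidedIdeal A) : Set A)) ∧
    (((sSup {I : TwoSidedIdeal A | TwoSidedIdeal.IsGraded 𝒜 I ∧ I ≠ ⊤} :
          TwoSidedIdeal A) : Set A) =
        ((sSup {I : Submodule Aᵐᵒᵖ A | Ideal.IsGradedRight 𝒜 I ∧ I ≠ ⊤} :
          Submodule Aᵐᵒᵖ A) : Set A)) := by
  rw [GradedRing.isGreatest_isGradedLeft_ne_top.csSup_eq,
    GradedRing.isGreatest_isGraded_ne_top.csSup_eq,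
    GradedRing.isGreatest_isGradedRight_ne_top.csSup_eq]
  exact ⟨rfl, rfl⟩

end
end

section
/- Let Γ be a cancellation monoid with neutral element e, D a Γ-graded division ring, and E a nonzero Γ-graded D-module. Then every linearly independent subset of E consisting of homogeneous elements is contained in a maximal such subset, and every maximal linearly independent homogeneous subset S of E is a free D-basis of E; in particular, E is a free D-module admitting a basis consisting of homogeneous elements. -/
/-!
The span of a set of homogeneous elements is a graded submodule. If `x` is homogeneous of
degree `γ` and `a • x` lies in such a span with `a ≠ 0`, pick a nonzero component `a_δ` of `a`:
by cancellation the `(δ + γ)`-component of `a • x` is `a_δ • x`, which therefore lies in the span,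
and `a_δ` is invertible, so `x` does too. Hence a homogeneous element outside the span of a
linearly independent homogeneous set can be adjoined to it, so a maximal such set (which exists by
Zorn's lemma) has every homogeneous element in its span, and homogeneous elements generate `E`.
-/

section

variable {Γ : Type*} [AddCancelMonoid Γ] [DecidableEq Γ]
variable {D : Type*} [Ring D] (𝒟 : Γ → AddSubgroup D) [GradedRing 𝒟]
variable {E : Type*} [AddCommGroup E] [Module D E]
variable (ℰ : Γ → AddSubgroup E) [SetLike.GradedSMul 𝒟 ℰ] [DirectSum.Decomposition ℰ]

/-- A subset of the `Γ`-graded module `E` is a linearly independent homogeneous subset if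
it consists of (nonzero) homogeneous elements and is linearly independent over `D`. -/
def IsLinIndepHomogeneous (S : Set E) : Prop :=
  (∀ x ∈ S, x ≠ 0 ∧ ∃ γ : Γ, x ∈ ℰ γ) ∧ LinearIndependent D ((↑) : S → E)

open DirectSum SetLike Submodule

section GradedModule

variable {ι A M σA σM : Type*} [DecidableEq ι]
variable [Semiring A] [AddCommMonoid M] [Module A M] [SetLike σM M] [AddSubmonoidClass σM M]
variable (ℳ : ι → σM) [Decomposition ℳ]

theorem coe_decompose_mem_of_mem {P : Type*} [SetLike P M] [ZeroMemClass P M] {p : P} {m : M}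
    {j : ι} (hm : m ∈ ℳ j) (hmp : m ∈ p) (k : ι) : (decompose ℳ m k : M) ∈ p := by
  by_cases hjk : j = k
  · rwa [← hjk, decompose_of_mem_same ℳ hm]
  · rw [decompose_of_mem_ne ℳ hm hjk]
    exact zero_mem p

theorem Submodule.eq_top_of_forall_homogeneous_mem {p : Submodule A M}
    (hp : ∀ i, ∀ m ∈ ℳ i, m ∈ p) : p = ⊤ := by
  refine eq_top_iff'.2 fun w => ?_
  induction w using Decomposition.inductionOn ℳ with
  | zero => exact zero_mem p
  | homogeneous m => exact hp _ _ m.2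
  | add m m' hm hm' => exact add_mem hm hm'

variable [AddMonoid ι] [SetLike σA A] [AddSubmonoidClass σA A] (𝒜 : ι → σA) [GradedRing 𝒜]
variable [GradedSMul 𝒜 ℳ]

include 𝒜 in
theorem coe_decompose_smul_mem {p : Submodule A M} {m : M} {j : ι} (hm : m ∈ ℳ j) (hmp : m ∈ p)
    (a : A) (k : ι) : (decompose ℳ (a • m) k : M) ∈ p := by
  induction a using Decomposition.inductionOn 𝒜 with
  | zero => simp
  | homogeneous a =>
    exact coe_decompose_mem_of_mem ℳ (GradedSMul.smul_mem a.2 hm) (p.smul_mem _ hmp) k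
  | add a b ha hb =>
    rw [add_smul, decompose_add, DirectSum.add_apply, AddMemClass.coe_add]
    exact add_mem ha hb

include 𝒜 in
theorem Submodule.isHomogeneous_span {s : Set M} (hs : ∀ m ∈ s, ∃ i, m ∈ ℳ i) :
    (span A s).IsHomogeneous ℳ := by
  intro k w hw
  obtain ⟨n, c, x, rfl⟩ := mem_span_set'.1 hw
  rw [decompose_sum, DFinsupp.finsetSum_apply, AddSubmonoidClass.coe_finsetSum]
  refine sum_mem fun t _ => ?_
  obtain ⟨j, hj⟩ := hs _ (x t).2
  exact coe_decompose_smul_mem ℳ 𝒜 hj (subset_span (x t).2) _ _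

theorem coe_decompose_smul_add_of_right_mem [IsRightCancelAdd ι] {a : A} {m : M} {i j : ι}
    (hm : m ∈ ℳ j) : (decompose ℳ (a • m) (i + j) : M) = (decompose 𝒜 a i : A) • m := by
  induction a using Decomposition.inductionOn 𝒜 with
  | zero => simp
  | @homogeneous k a =>
    have ham : (a : A) • m ∈ ℳ (k + j) := GradedSMul.smul_mem a.2 hm
    by_cases hki : k = i
    · subst hki
      rw [decompose_of_mem_same ℳ ham, decompose_coe, of_eq_same]
    · rw [decompose_of_mem_ne ℳ ham (fun h => hki (add_right_cancel h)), decompose_coe,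
        of_eq_of_ne _ _ _ (Ne.symm hki), ZeroMemClass.coe_zero, zero_smul]
  | add a b ha hb =>
    rw [add_smul, decompose_add, DirectSum.add_apply, AddMemClass.coe_add, ha, hb, decompose_add,
      DirectSum.add_apply, AddMemClass.coe_add, add_smul]

theorem Submodule.IsHomogeneous.mem_of_smul_mem [IsRightCancelAdd ι]
    (hdiv : ∀ (i : ι) (a : A), a ∈ 𝒜 i → a ≠ 0 → IsUnit a) {p : Submodule A M}
    (hp : p.IsHomogeneous ℳ) {a : A} {m : M} {j : ι} (hm : m ∈ ℳ j) (ha : a ≠ 0)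
    (ham : a • m ∈ p) : m ∈ p := by
  obtain ⟨i, hi⟩ : ∃ i, (decompose 𝒜 a i : A) ≠ 0 := by
    by_contra! h
    exact ha ((decompose 𝒜).injective (by ext i; simp [h i]))
  obtain ⟨u, hu⟩ := hdiv i _ (decompose 𝒜 a i).2 hi
  have hum : (u : A) • m ∈ p := by
    rw [hu, ← coe_decompose_smul_add_of_right_mem ℳ 𝒜 hm]
    exact hp _ ham
  exact (p.smul_mem_iff' u).1 hum

end GradedModule

namespace IsLinIndepHomogeneous

variable {ℰ}

section

omit [AddCancelMonoid Γ] [DecidableEq Γ] [Decomposition ℰ]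

theorem empty : IsLinIndepHomogeneous (D := D) ℰ ∅ :=
  ⟨by simp, linearIndependent_empty D E⟩

theorem sUnion {c : Set (Set E)} (hc : ∀ S ∈ c, IsLinIndepHomogeneous (D := D) ℰ S)
    (hchain : IsChain (· ⊆ ·) c) : IsLinIndepHomogeneous (D := D) ℰ (⋃₀ c) :=
  ⟨fun _ ⟨S, hS, hxS⟩ => (hc S hS).1 _ hxS,
    linearIndepOn_sUnion_of_directed (v := id) hchain.directedOn fun S hS => (hc S hS).2⟩

theorem exists_maximal_superset {V : Set E} (hV : IsLinIndepHomogeneous (D := D) ℰ V) :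
    ∃ S, V ⊆ S ∧ Maximal (IsLinIndepHomogeneous (D := D) ℰ) S :=
  zorn_subset_nonempty {S | IsLinIndepHomogeneous (D := D) ℰ S}
    (fun _ hc hchain _ => ⟨_, sUnion hc hchain, fun _ => Set.subset_sUnion_of_mem⟩) V hV

end

theorem insert_of_notMem_span (hdiv : ∀ (γ : Γ) (a : D), a ∈ 𝒟 γ → a ≠ 0 → IsUnit a)
    {S : Set E} (hS : IsLinIndepHomogeneous (D := D) ℰ S) {x : E} {γ : Γ} (hx : x ∈ ℰ γ)
    (hxS : x ∉ span D S) : IsLinIndepHomogeneous (D := D) ℰ (insert x S) := by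
  refine ⟨?_, LinearIndepOn.id_insert' hS.2 fun a hax => ?_⟩
  · rintro y (rfl | hy)
    · exact ⟨fun h => hxS (h ▸ zero_mem _), γ, hx⟩
    · exact hS.1 y hy
  · by_contra ha
    have hspan := isHomogeneous_span ℰ 𝒟 fun y hy => (hS.1 y hy).2
    exact hxS (hspan.mem_of_smul_mem ℰ 𝒟 hdiv hx ha hax)

theorem span_eq_top_of_maximal (hdiv : ∀ (γ : Γ) (a : D), a ∈ 𝒟 γ → a ≠ 0 → IsUnit a)
    {S : Set E} (hS : Maximal (IsLinIndepHomogeneous (D := D) ℰ) S) : span D S = ⊤ :=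
  eq_top_of_forall_homogeneous_mem ℰ fun γ x hx => by
    by_contra hxS
    exact hxS (subset_span (hS.mem_of_prop_insert (hS.prop.insert_of_notMem_span 𝒟 hdiv hx hxS)))

end IsLinIndepHomogeneous

/-- **Proposition 4.1(i)–(ii).**  Let `Γ` be a cancellation monoid (written additively),
`D` a `Γ`-graded division ring (every nonzero homogeneous element is invertible) and `E`
a nonzero `Γ`-graded `D`-module.  Then every linearly independent homogeneous subset of
`E` is contained in a maximal one, every maximal linearly independent homogeneous subset
of `E` is a free `D`-basis of `E`, and in particular `E` is a free `D`-module with a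
homogeneous basis. -/
theorem maximal_linIndep_homogeneous_is_basis
    [Nontrivial E]
    (hdiv : ∀ (γ : Γ) (a : D), a ∈ 𝒟 γ → a ≠ 0 → IsUnit a) :
    (∀ V : Set E, IsLinIndepHomogeneous (D := D) ℰ V →
        ∃ S : Set E, V ⊆ S ∧ IsLinIndepHomogeneous (D := D) ℰ S ∧
          ∀ S' : Set E, IsLinIndepHomogeneous (D := D) ℰ S' → S ⊆ S' → S' = S) ∧
    (∀ S : Set E, IsLinIndepHomogeneous (D := D) ℰ S →
        (∀ S' : Set E, IsLinIndepHomogeneous (D := D) ℰ S' → S ⊆ S' → S' = S) →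
        LinearIndependent D ((↑) : S → E) ∧ Submodule.span D S = ⊤) ∧
    (∃ S : Set E, (∀ x ∈ S, x ≠ 0 ∧ ∃ γ : Γ, x ∈ ℰ γ) ∧
        LinearIndependent D ((↑) : S → E) ∧ Submodule.span D S = ⊤) := by
  refine ⟨fun V hV => ?_, fun S hS hmax => ⟨hS.2, ?_⟩, ?_⟩
  · obtain ⟨S, hVS, hS⟩ := hV.exists_maximal_superset
    exact ⟨S, hVS, hS.prop, fun S' hS' hSS' => hS.eq_of_superset hS' hSS'⟩
  · exact IsLinIndepHomogeneous.span_eq_top_of_maximal 𝒟 hdiv ⟨hS, fun S' hS' hSS' => (hmax S' hS' hSS').le⟩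
  · obtain ⟨S, -, hS⟩ := (IsLinIndepHomogeneous.empty (D := D) (ℰ := ℰ)).exists_maximal_superset
    exact ⟨S, hS.prop.1, hS.prop.2, IsLinIndepHomogeneous.span_eq_top_of_maximal 𝒟 hdiv hS⟩

end
end
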